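/- arXiv:1805.02038 — 4 statements merged into one kernel-verified Lean document; each statement's English description precedes it below -/
import Mathlib

section
/- For closed rational intervals X, Y with X⁻ < X⁺ and Y⁻ < Y⁺: X⁻ < Y⁻ holds if and only if there exist intervals Y' and W such that Y starts Y', X starts W, and Y' finishes W. (Here 's' is 'starts': same left endpoint, smaller right endpoint; 'f' is 'finishes': same right endpoint, larger left endpoint.) -/
/-- `X (s) Y`: X⁻ = Y⁻ and X⁺ < Y⁺. -/
def AllenS (X Y : ℚ × ℚ) : Prop := X.1 = Y.1 ∧ X.2 < Y.2

/-- `X (f) Y`: X⁺ = Y⁺ and X⁻ > Y⁻. -/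
def AllenF (X Y : ℚ × ℚ) : Prop := X.2 = Y.2 ∧ X.1 > Y.1

theorem lt_left_endpoints_iff (X Y : ℚ × ℚ) (hX : X.1 < X.2) (hY : Y.1 < Y.2) :
    X.1 < Y.1 ↔
      ∃ Y' W : ℚ × ℚ, Y'.1 < Y'.2 ∧ W.1 < W.2 ∧
        AllenS Y Y' ∧ AllenS X W ∧ AllenF Y' W := by
  constructor
  · intro h
    refine ⟨(Y.1, max X.2 Y.2 + 1), (X.1, max X.2 Y.2 + 1), ?_, ?_, ?_, ?_, ?_⟩ <;>
      simp [AllenS, AllenF] <;>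
      (try constructor) <;> linarith [le_max_left X.2 Y.2, le_max_right X.2 Y.2]
  · rintro ⟨Y', W, _, _, ⟨hY1, _⟩, ⟨hX1, _⟩, _, hWY'⟩
    rw [hX1, ← hY1] at *
    linarith
end

section
/- For closed rational intervals X, Y with X⁻ < X⁺ and Y⁻ < Y⁺: X⁺ < Y⁺ holds if and only if there exist intervals X' and W such that X finishes X', Y finishes W, and X' starts W. -/
theorem lt_right_endpoints_iff (X Y : ℚ × ℚ) (hX : X.1 < X.2) (hY : Y.1 < Y.2) :
    X.2 < Y.2 ↔
      ∃ X' W : ℚ × ℚ, X'.1 < X'.2 ∧ W.1 < W.2 ∧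
        AllenF X X' ∧ AllenF Y W ∧ AllenS X' W := by
  constructor
  · intro h
    refine ⟨(min X.1 Y.1 - 1, X.2), (min X.1 Y.1 - 1, Y.2), ?_, ?_, ?_, ?_, ?_⟩ <;>
      simp [AllenF, AllenS] <;>
      linarith [min_le_left X.1 Y.1, min_le_right X.1 Y.1]
  · rintro ⟨X', W, _, _, ⟨h1, _⟩, ⟨h2, _⟩, _, h3⟩
    linarith
end

section
/- The basic interval relations 's' (starts) and 'f' (finishes) are both primitive positive definable from the relation 'm' (meets): there is an explicit primitive positive formula over the meets relation m which, for all intervals X, Y, holds iff X⁻ = Y⁻ ∧ X⁺ < Y⁺ (i.e. X (s) Y), and likewise there is an explicit primitive positive formula over m defining f. -/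
/-- An interval is a pair of rationals with strictly increasing endpoints. -/
def IsInterval (X : ℚ × ℚ) : Prop := X.1 < X.2

/-- `X (m) Y` (meets): X⁺ = Y⁻. -/
def AllenM (X Y : ℚ × ℚ) : Prop := X.2 = Y.1

/-- The relations `s` and `f` are pp-definable from `m`: explicit pp formulas over
the meets relation (existential quantification over intervals plus conjunctions of
`m`-atoms) define them. -/
theorem s_and_f_pp_definable_from_m :
    (∀ X Y : ℚ × ℚ, IsInterval X → IsInterval Y →
      (AllenS X Y ↔
        ∃ Z W V : ℚ × ℚ, IsInterval Z ∧ IsInterval W ∧ IsInterval V ∧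
          AllenM Z X ∧ AllenM Z Y ∧ AllenM X W ∧ AllenM W V ∧ AllenM Y V)) ∧
    (∀ X Y : ℚ × ℚ, IsInterval X → IsInterval Y →
      (AllenF X Y ↔
        ∃ V W Z : ℚ × ℚ, IsInterval V ∧ IsInterval W ∧ IsInterval Z ∧
          AllenM X V ∧ AllenM Y V ∧ AllenM W X ∧ AllenM Z W ∧ AllenM Z Y)) := by
  constructor
  · intro X Y hX hY
    constructor
    · rintro ⟨h1, h2⟩
      exact ⟨(X.1 - 1, X.1), (X.2, Y.2), (Y.2, Y.2 + 1),
        by simp [IsInterval], h2, by simp [IsInterval],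
        rfl, h1 ▸ rfl, rfl, rfl, rfl⟩
    · rintro ⟨Z, W, V, hZ, hW, hV, h1, h2, h3, h4, h5⟩
      simp only [AllenM, IsInterval, AllenS] at *
      constructor
      · rw [← h1, ← h2]
      · calc X.2 = W.1 := h3
          _ < W.2 := hW
          _ = V.1 := h4
          _ = Y.2 := h5.symm
  · intro X Y hX hY
    constructor
    · rintro ⟨h1, h2⟩
      exact ⟨(X.2, X.2 + 1), (Y.1, X.1), (Y.1 - 1, Y.1),
        by simp [IsInterval], h2, by simp [IsInterval],
        rfl, h1.symm, rfl, rfl, rfl⟩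
    · rintro ⟨V, W, Z, hV, hW, hZ, h1, h2, h3, h4, h5⟩
      simp only [AllenM, IsInterval, AllenF] at *
      constructor
      · rw [h1, h2]
      · calc Y.1 = Z.2 := h5.symm
          _ = W.1 := h4
          _ < W.2 := hW
          _ = X.1 := h3
end

section
/- In the Cardinal Direction Calculus on ℚ², the first-coordinate order is pp-definable: for points X, Y, X₁ < Y₁ holds iff there exist points X', Y' with X' (N) X, Y' (N) Y, and X' (W) Y'. (N: same first coordinate, larger second; W: smaller first coordinate, same second.) -/
/-- `X (N) Y`: X₁ = Y₁ ∧ X₂ > Y₂. -/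
def CDCn (X Y : ℚ × ℚ) : Prop := X.1 = Y.1 ∧ X.2 > Y.2

/-- `X (W) Y`: X₁ < Y₁ ∧ X₂ = Y₂. -/
def CDCw (X Y : ℚ × ℚ) : Prop := X.1 < Y.1 ∧ X.2 = Y.2

theorem first_coordinate_lt_pp_definable (X Y : ℚ × ℚ) :
    X.1 < Y.1 ↔ ∃ X' Y' : ℚ × ℚ, CDCn X' X ∧ CDCn Y' Y ∧ CDCw X' Y' := by
  constructor
  · intro h
    -- raise both points to one common height above each of them
    set t := max X.2 Y.2 + 1
    have hX : X.2 < t := (le_max_left _ _).trans_lt (lt_add_one _)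
    have hY : Y.2 < t := (le_max_right _ _).trans_lt (lt_add_one _)
    exact ⟨(X.1, t), (Y.1, t), ⟨rfl, hX⟩, ⟨rfl, hY⟩, h, rfl⟩
  · rintro ⟨X', Y', ⟨hX, -⟩, ⟨hY, -⟩, hlt, -⟩
    rwa [hX, hY] at hlt
end
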